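/- Let f : B → ℝ be a measurable function on a ball B ⊂ ℂ^n near whose center f(z) = 1/|log|z|²| (for |z| small, f extended positively elsewhere and smooth away from 0). Then ∫_B |∇f|^(2n) / f^(2n-2) dV < ∞, while ∇(f^(1/n)) is unbounded near 0. -/

import Mathlib

open Metric MeasureTheory Set Filter
open scoped ENNReal NNReal

set_option maxHeartbeats 1000000
set_option synthInstance.maxHeartbeats 400000

lemma radial_lintegral (d : ℕ) (hd : 0 < d) (G : ℝ → ℝ≥0∞) (hG : Measurable G) :
    ∫⁻ x : EuclideanSpace ℝ (Fin d), G ‖x‖ =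
      (volume : Measure (EuclideanSpace ℝ (Fin d))).toSphere Set.univ *
        ∫⁻ r in Set.Ioi (0:ℝ), ENNReal.ofReal (r ^ (d - 1)) * G r := by
  set E := EuclideanSpace ℝ (Fin d)
  haveI : Nonempty (Fin d) := Fin.pos_iff_nonempty.mp hd
  haveI : Nontrivial E := inferInstance
  set μ : Measure E := volume with hμ
  have hdim : Module.finrank ℝ E = d := finrank_euclideanSpace_fin
  calc
    ∫⁻ x : E, G ‖x‖ ∂μ = ∫⁻ x in ({(0:E)}ᶜ : Set E), G ‖x‖ ∂μ := by
      rw [MeasureTheory.restrict_compl_singleton]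
    _ = ∫⁻ x : ({(0:E)}ᶜ : Set E), G ‖x.1‖ ∂(μ.comap (↑)) :=
      (lintegral_subtype_comap (measurableSet_singleton 0).compl _).symm
    _ = ∫⁻ p : sphere (0:E) 1 × Set.Ioi (0:ℝ), G p.2
          ∂(μ.toSphere.prod (Measure.volumeIoiPow (Module.finrank ℝ E - 1))) := by
      rw [← (μ.measurePreserving_homeomorphUnitSphereProd).lintegral_comp_emb
        (Homeomorph.measurableEmbedding _) (fun p => G p.2)]
      refine lintegral_congr fun x => ?_
      simp
    _ = μ.toSphere Set.univ * ∫⁻ r : Set.Ioi (0:ℝ), G r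
          ∂(Measure.volumeIoiPow (Module.finrank ℝ E - 1)) := by
      rw [lintegral_prod (fun p : ↥(sphere (0:E) 1) × ↥(Set.Ioi (0:ℝ)) => G ↑p.2)
        ((hG.comp (measurable_subtype_coe.comp measurable_snd)).aemeasurable)]
      simp [lintegral_const, mul_comm]
    _ = μ.toSphere Set.univ * ∫⁻ r in Set.Ioi (0:ℝ), ENNReal.ofReal (r ^ (d - 1)) * G r := by
      rw [Measure.volumeIoiPow, lintegral_withDensity_eq_lintegral_mul _
        (f := fun r : Set.Ioi (0:ℝ) => ENNReal.ofReal (r.1 ^ (Module.finrank ℝ E - 1)))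
        (by fun_prop) (g := fun r : Set.Ioi (0:ℝ) => G ↑r) (hG.comp measurable_subtype_coe)]
      rw [hdim]
      rw [← lintegral_subtype_comap measurableSet_Ioi
        (fun r : ℝ => ENNReal.ofReal (r ^ (d - 1)) * G r)]
      rfl

lemma oneDim_integrable (n : ℕ) (ρ : ℝ) (hρ : 0 < ρ) (hρ2 : ρ ≤ 1/2) :
    IntegrableOn (fun r : ℝ => 1 / (r * (-Real.log r) ^ (2*n+2))) (Ioc 0 ρ) := by
  set Φ : ℝ → ℝ := fun r => ((2*n+1 : ℝ))⁻¹ * ((-Real.log r) ^ (2*n+1))⁻¹ with hΦ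
  have hρ1 : ρ < 1 := by linarith
  apply intervalIntegral.integrableOn_deriv_of_nonneg (g := Φ)
  · intro x hx
    rcases eq_or_lt_of_le hx.1 with h0 | h0
    · have hΦ0 : Φ 0 = 0 := by simp [hΦ]
      have htend : Tendsto Φ (nhdsWithin 0 (Ioi 0)) (nhds 0) := by
        have T1 : Tendsto (fun r : ℝ => -Real.log r) (nhdsWithin 0 (Ioi 0)) Filter.atTop :=
          Filter.tendsto_neg_atBot_atTop.comp Real.tendsto_log_nhdsGT_zero
        have T2 : Tendsto (fun r : ℝ => ((-Real.log r) ^ (2*n+1))⁻¹)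
            (nhdsWithin 0 (Ioi 0)) (nhds 0) :=
          tendsto_inv_atTop_zero.comp ((tendsto_pow_atTop (by omega)).comp T1)
        simpa [hΦ] using T2.const_mul ((2*n+1:ℝ))⁻¹
      have : ContinuousWithinAt Φ (Ioi 0) 0 := by
        rw [ContinuousWithinAt, hΦ0]; exact htend
      subst h0
      exact ((continuousWithinAt_Ioi_iff_Ici).mp this).mono Icc_subset_Ici_self
    · have hx1 : x < 1 := lt_of_le_of_lt hx.2 hρ1
      have hlx : Real.log x < 0 := Real.log_neg h0 hx1
      have hL : (0:ℝ) < -Real.log x := by linarith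
      have hc : ContinuousAt Φ x := continuousAt_const.mul
        ((((Real.continuousAt_log h0.ne').neg).pow (2*n+1)).inv₀ (pow_ne_zero _ hL.ne'))
      exact hc.continuousWithinAt
  · intro x hx
    have hx0 : 0 < x := hx.1
    have hx1 : x < 1 := lt_trans hx.2 hρ1
    have hlx : Real.log x < 0 := Real.log_neg hx0 hx1
    have hL : (0:ℝ) < -Real.log x := by linarith
    have h1 : HasDerivAt (fun r : ℝ => -Real.log r) (-x⁻¹) x :=
      (Real.hasDerivAt_log hx0.ne').neg
    have h2 : HasDerivAt (fun r : ℝ => (-Real.log r)^(2*n+1))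
        ((↑(2*n+1) : ℝ) * (-Real.log x)^(2*n) * (-x⁻¹)) x := by
      have := h1.fun_pow (2*n+1)
      simpa using this
    have h3 := (h2.inv (pow_ne_zero _ hL.ne')).const_mul ((2*n+1 : ℝ))⁻¹
    refine h3.congr_deriv (Eq.symm ?_)
    have hx0' : x ≠ 0 := hx0.ne'
    have hL' : -Real.log x ≠ 0 := hL.ne'
    have h2n1 : ((2*n+1 : ℕ) : ℝ) ≠ 0 := by positivity
    field_simp
    ring_nf
    push_cast; ring
  · intro x hx
    have hx1 : x < 1 := lt_trans hx.2 hρ1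
    have hL : (0:ℝ) < -Real.log x := by
      have := Real.log_neg hx.1 hx1; linarith
    exact div_nonneg zero_le_one (mul_nonneg hx.1.le (pow_nonneg hL.le _))

lemma model_hasFDerivAt {E : Type*} [NormedAddCommGroup E] [InnerProductSpace ℝ E]
    (z : E) (hz : z ≠ 0) (hz1 : ‖z‖ < 1) :
    HasFDerivAt (fun w : E => -(Real.log (‖w‖^2))⁻¹)
      ((((Real.log (‖z‖^2))^2)⁻¹ * (‖z‖^2)⁻¹ * 2) • (innerSL ℝ z)) z := by
  have hnz : (0:ℝ) < ‖z‖ := norm_pos_iff.mpr hz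
  have hu : (0:ℝ) < ‖z‖^2 := by positivity
  have hu1 : ‖z‖^2 < 1 := by nlinarith
  have hL : Real.log (‖z‖^2) < 0 := Real.log_neg hu hu1
  have hsq : HasFDerivAt (fun w : E => ‖w‖^2) (2 • innerSL ℝ z) z := by
    simpa using (hasStrictFDerivAt_norm_sq z).hasFDerivAt
  have hlog : HasDerivAt Real.log (‖z‖^2)⁻¹ (‖z‖^2) := Real.hasDerivAt_log hu.ne'
  have hcomp1 : HasFDerivAt (fun w : E => Real.log (‖w‖^2))
      ((‖z‖^2)⁻¹ • (2 • innerSL ℝ z)) z := by exact hlog.comp_hasFDerivAt z hsq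
  have houter : HasDerivAt (fun y : ℝ => -(y⁻¹)) (((Real.log (‖z‖^2))^2)⁻¹)
      (Real.log (‖z‖^2)) := by
    simpa using (hasDerivAt_inv hL.ne).fun_neg
  have hcomp2 := houter.comp_hasFDerivAt z hcomp1
  refine hcomp2.congr_fderiv (Eq.symm ?_)
  ext y
  simp only [ContinuousLinearMap.smul_apply, smul_eq_mul, nsmul_eq_mul,
    ContinuousLinearMap.coe_smul', Pi.smul_apply, Nat.cast_ofNat]
  ring

lemma model_norm {E : Type*} [NormedAddCommGroup E] [InnerProductSpace ℝ E] (z : E) :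
    ‖(((Real.log (‖z‖^2))^2)⁻¹ * (‖z‖^2)⁻¹ * 2) • (innerSL ℝ z)‖
      = ((Real.log (‖z‖^2))^2)⁻¹ * (‖z‖^2)⁻¹ * 2 * ‖z‖ := by
  rw [norm_smul ((((Real.log (‖z‖^2))^2)⁻¹ * (‖z‖^2)⁻¹ * 2)) (innerSL ℝ z),
    innerSL_apply_norm, Real.norm_eq_abs, abs_of_nonneg (by positivity)]


lemma alg1 (n : ℕ) (hn : 1 ≤ n) (r a : ℝ) (hr : 0 < r) (ha : 0 < a) :
    ((a^2)⁻¹ * (r^2)⁻¹ * 2 * r)^(2*n) / (1/a)^(2*n-2)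
      = 2^(2*n) / (r^(2*n) * a^(2*n+2)) := by
  obtain ⟨m, rfl⟩ : ∃ m, n = m + 1 := ⟨n - 1, by omega⟩
  simp only [show 2*(m+1)-2 = 2*m from by omega, show 2*(m+1) = 2*m+2 from by omega,
    show 2*m+2-2 = 2*m from by omega,
    show 2*(m+1)+2 = 2*m+4 from by omega]
  have hr0 : r ≠ 0 := hr.ne'
  have ha0 : a ≠ 0 := ha.ne'
  simp only [one_div, inv_pow, mul_pow]
  field_simp
  ring

lemma alg2 (n : ℕ) (hn : 1 ≤ n) (r L : ℝ) (hr : 0 < r) (hL : 0 < L) :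
    r^(2*n-1) * (2^(2*n) / (r^(2*n) * (2*L)^(2*n+2)))
      = (1/4 : ℝ) * (1/(r * L^(2*n+2))) := by
  obtain ⟨m, rfl⟩ : ∃ m, n = m + 1 := ⟨n - 1, by omega⟩
  simp only [show 2*(m+1)-1 = 2*m+1 from by omega, show 2*(m+1) = 2*m+2 from by omega,
    show 2*m+2-1 = 2*m+1 from by omega,
    show 2*(m+1)+2 = 2*m+4 from by omega]
  have hr0 : r ≠ 0 := hr.ne'
  have hL0 : L ≠ 0 := hL.ne'
  rw [mul_pow]
  field_simp
  ring

/-- Model degenerate density `f(z) = 1/|log |z|²|` near an isolated zero: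
`∫_B |∇f|^(2n) / f^(2n-2) dV < ∞`, while `∇(f^(1/n))` is unbounded near `0`.
Here the ball `B ⊂ ℂ^n` is identified with a ball in `ℝ^(2n)`. -/
theorem stmt_8 (n : ℕ) (hn : 1 ≤ n) (R δ : ℝ) (hR : 0 < R) (hδ : 0 < δ) (hδR : δ ≤ R)
    (f : EuclideanSpace ℝ (Fin (2 * n)) → ℝ)
    (hsmooth : ContDiffOn ℝ (⊤ : ℕ∞) f (closedBall (0 : EuclideanSpace ℝ (Fin (2 * n))) R \ {0}))
    (hpos : ∀ z ∈ closedBall (0 : EuclideanSpace ℝ (Fin (2 * n))) R \ {0}, 0 < f z)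
    (hf : ∀ z : EuclideanSpace ℝ (Fin (2 * n)), z ≠ 0 → ‖z‖ < δ →
      f z = 1 / |Real.log (‖z‖ ^ 2)|) :
    IntegrableOn (fun z => ‖fderiv ℝ f z‖ ^ (2 * n) / f z ^ (2 * n - 2))
        (ball (0 : EuclideanSpace ℝ (Fin (2 * n))) R) volume
    ∧ ¬ ∃ C : ℝ, ∀ z : EuclideanSpace ℝ (Fin (2 * n)), z ≠ 0 → ‖z‖ < δ →
        ‖fderiv ℝ (fun w => f w ^ ((1 : ℝ) / n)) z‖ ≤ C := by
  have h2npos : 0 < 2*n := by omega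
  haveI : Nonempty (Fin (2*n)) := Fin.pos_iff_nonempty.mp h2npos
  haveI : Nontrivial (EuclideanSpace ℝ (Fin (2*n))) := inferInstance
  set ρ : ℝ := min δ (1/2) with hρdef
  have hρpos : 0 < ρ := lt_min hδ (by norm_num)
  have hρδ : ρ ≤ δ := min_le_left _ _
  have hρ2 : ρ ≤ 1/2 := min_le_right _ _
  have hρR : ρ ≤ R := le_trans hρδ hδR
  have hUopen : IsOpen (ball (0:(EuclideanSpace ℝ (Fin (2*n)))) R \ {0}) := isOpen_ball.sdiff isClosed_singleton
  have hUsub : ball (0:(EuclideanSpace ℝ (Fin (2*n)))) R \ {0} ⊆ closedBall 0 R \ {0} :=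
    diff_subset_diff_left ball_subset_closedBall
  have hdf : ∀ z : (EuclideanSpace ℝ (Fin (2*n))), z ∈ ball (0:(EuclideanSpace ℝ (Fin (2*n)))) R \ {0} → DifferentiableAt ℝ f z := fun z hz =>
    ((hsmooth.mono hUsub).contDiffAt (hUopen.mem_nhds hz)).differentiableAt (by simp)
  have hVopen : IsOpen (ball (0:(EuclideanSpace ℝ (Fin (2*n)))) ρ \ {0}) := isOpen_ball.sdiff isClosed_singleton
  have hmodel : ∀ w ∈ ball (0:(EuclideanSpace ℝ (Fin (2*n)))) ρ \ {0}, f w = -(Real.log (‖w‖^2))⁻¹ := by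
    intro w hw
    have hw0 : w ≠ (0:(EuclideanSpace ℝ (Fin (2*n)))) := hw.2
    have hwn : 0 < ‖w‖ := norm_pos_iff.mpr hw0
    have hwρ : ‖w‖ < ρ := mem_ball_zero_iff.mp hw.1
    have hL : Real.log (‖w‖^2) < 0 := Real.log_neg (by positivity) (by nlinarith)
    rw [hf w hw0 (lt_of_lt_of_le hwρ hρδ), abs_of_neg hL, one_div, inv_neg]
  have hfderiv : ∀ z ∈ ball (0:(EuclideanSpace ℝ (Fin (2*n)))) ρ \ {0},
      ‖fderiv ℝ f z‖ = ((Real.log (‖z‖^2))^2)⁻¹ * (‖z‖^2)⁻¹ * 2 * ‖z‖ := by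
    intro z hz
    have hz1 : ‖z‖ < 1 := lt_of_lt_of_le (mem_ball_zero_iff.mp hz.1) (by linarith)
    have heq : f =ᶠ[nhds z] (fun w : (EuclideanSpace ℝ (Fin (2*n))) => -(Real.log (‖w‖^2))⁻¹) :=
      Filter.eventually_of_mem (hVopen.mem_nhds hz) hmodel
    have hD := (model_hasFDerivAt z hz.2 hz1).congr_of_eventuallyEq heq
    rw [hD.fderiv, model_norm]
  constructor
  · -- Part 1 : integrability
    have hSmeas : MeasurableSet (ball (0:(EuclideanSpace ℝ (Fin (2*n)))) R \ ball 0 ρ) :=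
      measurableSet_ball.diff measurableSet_ball
    have I₁ : IntegrableOn (fun z : (EuclideanSpace ℝ (Fin (2*n))) => ‖fderiv ℝ f z‖ ^ (2*n) / f z ^ (2*n-2))
        (ball (0:(EuclideanSpace ℝ (Fin (2*n)))) R \ ball 0 ρ) volume := by
      set S : Set (EuclideanSpace ℝ (Fin (2*n))) := ball (0:(EuclideanSpace ℝ (Fin (2*n)))) R \ ball 0 ρ with hS
      set K : Set (EuclideanSpace ℝ (Fin (2*n))) := closedBall (0:(EuclideanSpace ℝ (Fin (2*n)))) R \ ball 0 ρ with hK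
      have hSK : S ⊆ K := diff_subset_diff_left ball_subset_closedBall
      have hKc : IsCompact K := (isCompact_closedBall 0 R).diff isOpen_ball
      have hKsub : K ⊆ closedBall (0:(EuclideanSpace ℝ (Fin (2*n)))) R \ {0} := fun z hz =>
        ⟨hz.1, fun h => hz.2 (by rw [h]; exact mem_ball_self hρpos)⟩
      rcases eq_empty_or_nonempty K with hKe | hKne
      · have hSe : S = ∅ := eq_empty_of_subset_empty (hKe ▸ hSK)
        rw [hSe]; exact integrableOn_empty
      · have hUD : UniqueDiffOn ℝ (closedBall (0:(EuclideanSpace ℝ (Fin (2*n)))) R \ {0}) := by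
          have h1 : UniqueDiffOn ℝ (closedBall (0:(EuclideanSpace ℝ (Fin (2*n)))) R) :=
            uniqueDiffOn_convex (convex_closedBall _ _)
              (by rw [interior_closedBall (0:(EuclideanSpace ℝ (Fin (2*n)))) hR.ne']; exact nonempty_ball.mpr hR)
          intro x hx
          have hnn : nhdsWithin x (closedBall (0:(EuclideanSpace ℝ (Fin (2*n)))) R ∩ {0}ᶜ) = nhdsWithin x (closedBall (0:(EuclideanSpace ℝ (Fin (2*n)))) R) :=
            nhdsWithin_inter_of_mem'
              (mem_nhdsWithin_of_mem_nhds (isOpen_compl_singleton.mem_nhds hx.2))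
          have h2 := (uniqueDiffWithinAt_congr
            (s := closedBall (0:(EuclideanSpace ℝ (Fin (2*n)))) R \ {0})
            (t := closedBall (0:(EuclideanSpace ℝ (Fin (2*n)))) R)
            (by rw [diff_eq]; exact hnn)).mpr (h1 x hx.1)
          exact h2
        have hcont : ContinuousOn (fderivWithin ℝ f (closedBall (0:(EuclideanSpace ℝ (Fin (2*n)))) R \ {0}))
            (closedBall (0:(EuclideanSpace ℝ (Fin (2*n)))) R \ {0}) :=
          hsmooth.continuousOn_fderivWithin hUD (by simp)
        obtain ⟨M, hM⟩ := hKc.exists_bound_of_continuousOn (hcont.mono hKsub)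
        obtain ⟨z₀, hz₀K, hz₀min⟩ := hKc.exists_isMinOn hKne (hsmooth.continuousOn.mono hKsub)
        have hc : 0 < f z₀ := hpos z₀ (hKsub hz₀K)
        have hM0 : 0 ≤ M := le_trans (norm_nonneg _) (hM z₀ hz₀K)
        have hfdS : ∀ z ∈ S, fderiv ℝ f z = fderivWithin ℝ f (closedBall (0:(EuclideanSpace ℝ (Fin (2*n)))) R \ {0}) z := by
          intro z hz
          have hzU : z ∈ ball (0:(EuclideanSpace ℝ (Fin (2*n)))) R \ {0} :=
            ⟨hz.1, fun h => hz.2 (by rw [h]; exact mem_ball_self hρpos)⟩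
          exact (fderivWithin_of_mem_nhds (Filter.mem_of_superset
            (hUopen.mem_nhds hzU) hUsub)).symm
        have hbound : ∀ z ∈ S, ‖‖fderiv ℝ f z‖ ^ (2*n) / f z ^ (2*n-2)‖ ≤
            M ^ (2*n) / f z₀ ^ (2*n-2) := by
          intro z hz
          have hzK : z ∈ K := hSK hz
          have hfz : 0 < f z := hpos z (hKsub hzK)
          have h1 : ‖fderiv ℝ f z‖ ^ (2*n) ≤ M ^ (2*n) := by
            apply pow_le_pow_left₀ (norm_nonneg _)
            rw [hfdS z hz]; exact hM z hzK
          have h2 : f z₀ ^ (2*n-2) ≤ f z ^ (2*n-2) :=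
            pow_le_pow_left₀ hc.le ((isMinOn_iff.mp hz₀min) z hzK) _
          have h3 : (0:ℝ) ≤ ‖fderiv ℝ f z‖ ^ (2*n) / f z ^ (2*n-2) := by positivity
          rw [Real.norm_eq_abs, abs_of_nonneg h3]
          exact div_le_div₀ (pow_nonneg hM0 _) h1 (pow_pos hc _) h2
        refine ⟨?_, HasFiniteIntegral.restrict_of_bounded (C := M ^ (2*n) / f z₀ ^ (2*n-2))
          ((measure_mono diff_subset).trans_lt measure_ball_lt_top)
          ((ae_restrict_mem hSmeas).mono hbound)⟩
        have hnum : AEMeasurable (fun z : (EuclideanSpace ℝ (Fin (2*n))) => ‖fderiv ℝ f z‖ ^ (2*n)) (volume.restrict S) :=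
          (((measurable_fderiv ℝ f).norm).pow_const _).aemeasurable
        have hden : AEMeasurable (fun z : (EuclideanSpace ℝ (Fin (2*n))) => f z ^ (2*n-2)) (volume.restrict S) := by
          have hfc : ContinuousOn f S := hsmooth.continuousOn.mono (fun z hz => hKsub (hSK hz))
          exact ((hfc.aemeasurable hSmeas).pow_const _)
        exact (hnum.div hden).aestronglyMeasurable
    have I₂ : IntegrableOn (fun z : (EuclideanSpace ℝ (Fin (2*n))) =>
        ‖fderiv ℝ f z‖ ^ (2*n) / f z ^ (2*n-2)) (ball (0:(EuclideanSpace ℝ (Fin (2*n)))) ρ)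
        volume := by
      set h₁ : ℝ → ℝ := fun r => (2:ℝ)^(2*n) / (r^(2*n) * |Real.log (r^2)|^(2*n+2)) with hh₁
      have hh₁meas : Measurable h₁ := by
        apply Measurable.div measurable_const
        exact (measurable_id.pow_const _).mul
          (((Real.measurable_log.comp (measurable_id.pow_const 2)).abs).pow_const _)
      have hpt : ∀ z ∈ ball (0:(EuclideanSpace ℝ (Fin (2*n)))) ρ \ {0},
          ‖fderiv ℝ f z‖ ^ (2*n) / f z ^ (2*n-2) = h₁ ‖z‖ := by
        intro z hz
        obtain ⟨m, hm⟩ : ∃ m, n = m + 1 := ⟨n - 1, by omega⟩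
        have hzρ : ‖z‖ < ρ := mem_ball_zero_iff.mp hz.1
        have hzn : 0 < ‖z‖ := norm_pos_iff.mpr hz.2
        have hz1 : ‖z‖ < 1 := by linarith
        have hL : Real.log (‖z‖^2) < 0 := Real.log_neg (by positivity) (by nlinarith)
        have hfz : f z = 1 / |Real.log (‖z‖^2)| := hf z hz.2 (lt_of_lt_of_le hzρ hρδ)
        rw [hfderiv z hz, hfz, hh₁]
        have haL : 0 < |Real.log (‖z‖^2)| := abs_pos.mpr hL.ne
        rw [show (Real.log (‖z‖^2))^2 = |Real.log (‖z‖^2)|^2 from (sq_abs _).symm]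
        exact alg1 n hn ‖z‖ |Real.log (‖z‖^2)| hzn haL
      have hint : IntegrableOn (fun z : (EuclideanSpace ℝ (Fin (2*n))) => h₁ ‖z‖)
          (ball (0:(EuclideanSpace ℝ (Fin (2*n)))) ρ) volume := by
        constructor
        · exact ((hh₁meas.comp measurable_norm).aestronglyMeasurable)
        · set G : ℝ → ℝ≥0∞ :=
            fun r => (Ioo (0:ℝ) ρ).indicator (fun r => (‖h₁ r‖₊ : ℝ≥0∞)) r with hG
          have hGmeas : Measurable G :=
            (hh₁meas.nnnorm.coe_nnreal_ennreal).indicator measurableSet_Ioo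
          have heq1 : ∫⁻ z in ball (0:(EuclideanSpace ℝ (Fin (2*n)))) ρ,
              (‖h₁ ‖z‖‖₊ : ℝ≥0∞) ∂volume
              = ∫⁻ z in ball (0:(EuclideanSpace ℝ (Fin (2*n)))) ρ, G ‖z‖ ∂volume := by
            refine setLIntegral_congr_fun measurableSet_ball ?_
            intro z hz
            beta_reduce
            rcases eq_or_ne z 0 with rfl | hz0
            · have h10 : h₁ ‖(0:(EuclideanSpace ℝ (Fin (2*n))))‖ = 0 := by
                simp [hh₁, zero_pow h2npos.ne']
              rw [h10, hG]
              simp [indicator_of_notMem (by simp : (0:ℝ) ∉ Ioo (0:ℝ) ρ)]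
            · have hmem : ‖z‖ ∈ Ioo (0:ℝ) ρ :=
                ⟨norm_pos_iff.mpr hz0, mem_ball_zero_iff.mp hz⟩
              rw [hG]; simp [indicator_of_mem hmem]
          show HasFiniteIntegral _ _
          rw [HasFiniteIntegral]
          change ∫⁻ z in ball (0:(EuclideanSpace ℝ (Fin (2*n)))) ρ, (‖h₁ ‖z‖‖₊ : ℝ≥0∞) ∂volume < ⊤
          rw [heq1]
          calc ∫⁻ z in ball (0:(EuclideanSpace ℝ (Fin (2*n)))) ρ, G ‖z‖ ∂volume
              ≤ ∫⁻ z : (EuclideanSpace ℝ (Fin (2*n))), G ‖z‖ ∂volume :=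
                setLIntegral_le_lintegral _ _
            _ = (volume : Measure (EuclideanSpace ℝ (Fin (2*n)))).toSphere Set.univ *
                ∫⁻ r in Set.Ioi (0:ℝ), ENNReal.ofReal (r ^ (2*n - 1)) * G r :=
                radial_lintegral (2*n) h2npos G hGmeas
            _ < ⊤ := by
                apply ENNReal.mul_lt_top (measure_lt_top _ _)
                have hr1 : ∀ r : ℝ, ENNReal.ofReal (r^(2*n-1)) * G r
                    = (Ioo (0:ℝ) ρ).indicator
                      (fun r => (‖(1/4 : ℝ) * (1/(r * (-Real.log r)^(2*n+2)))‖₊ : ℝ≥0∞)) r := by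
                  intro r
                  by_cases hr : r ∈ Ioo (0:ℝ) ρ
                  · simp only [hG]
                    rw [indicator_of_mem hr, indicator_of_mem hr]
                    have hr0 : 0 < r := hr.1
                    have hr1' : r < 1 := by have := hr.2; linarith
                    have hlr : Real.log r < 0 := Real.log_neg hr0 hr1'
                    have hLpos : 0 < -Real.log r := by linarith
                    have hid : r^(2*n-1) * h₁ r
                        = (1/4 : ℝ) * (1/(r * (-Real.log r)^(2*n+2))) := by
                      simp only [hh₁]
                      have hlog2 : Real.log (r^2) = 2 * Real.log r := by
                        rw [Real.log_pow]; push_cast; ring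
                      rw [hlog2, abs_of_neg (by linarith : 2 * Real.log r < 0),
                        show -(2 * Real.log r) = 2 * (-Real.log r) from by ring]
                      exact alg2 n hn r (-Real.log r) hr0 hLpos
                    rw [← Real.enorm_eq_ofReal (by positivity : (0:ℝ) ≤ r^(2*n-1)), enorm_eq_nnnorm,
                      ← ENNReal.coe_mul, ← nnnorm_mul, hid]
                  · simp only [hG]
                    rw [indicator_of_notMem hr, indicator_of_notMem hr, mul_zero]
                have heq2 : ∫⁻ r in Set.Ioi (0:ℝ), ENNReal.ofReal (r^(2*n-1)) * G r
                    = ∫⁻ r in Ioo (0:ℝ) ρ,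
                      (‖(1/4 : ℝ) * (1/(r * (-Real.log r)^(2*n+2)))‖₊ : ℝ≥0∞) := by
                  simp_rw [hr1]
                  rw [lintegral_indicator measurableSet_Ioo,
                    Measure.restrict_restrict measurableSet_Ioo,
                    inter_eq_self_of_subset_left Ioo_subset_Ioi_self]
                rw [heq2]
                have hInt0 : IntegrableOn
                    (fun r : ℝ => (1/4 : ℝ) * (1/(r * (-Real.log r)^(2*n+2))))
                    (Ioc (0:ℝ) ρ) volume :=
                  (oneDim_integrable n ρ hρpos hρ2).const_mul (1/4 : ℝ)
                have hInt : IntegrableOn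
                    (fun r : ℝ => (1/4 : ℝ) * (1/(r * (-Real.log r)^(2*n+2))))
                    (Ioo (0:ℝ) ρ) volume := hInt0.mono_set Ioo_subset_Ioc_self
                exact hInt.2
      apply hint.congr
      have h0 : ∀ᵐ z ∂(volume.restrict (ball (0:(EuclideanSpace ℝ (Fin (2*n)))) ρ)),
          z ≠ (0:(EuclideanSpace ℝ (Fin (2*n)))) := by
        refine ae_restrict_of_ae ?_
        exact ((Set.countable_singleton (0:(EuclideanSpace ℝ (Fin (2*n))))).ae_notMem
          volume).mono (fun z hz => by simpa using hz)
      filter_upwards [ae_restrict_mem measurableSet_ball, h0] with z hz hz0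
      exact (hpt z ⟨hz, hz0⟩).symm
    have hcover : ball (0:(EuclideanSpace ℝ (Fin (2*n)))) R ⊆
        (ball (0:(EuclideanSpace ℝ (Fin (2*n)))) R \ ball 0 ρ) ∪ ball 0 ρ := by
      intro z hz
      by_cases h : z ∈ ball (0:(EuclideanSpace ℝ (Fin (2*n)))) ρ
      · exact Or.inr h
      · exact Or.inl ⟨hz, h⟩
    exact (I₁.union I₂).mono_set hcover

  · -- Part 2 : unboundedness
    rintro ⟨C₀, hC₀⟩
    set C := max C₀ 1 with hCdef
    have hC1 : (1:ℝ) ≤ C := le_max_right _ _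
    have hCpos : (0:ℝ) < C := lt_of_lt_of_le one_pos hC1
    have hC : ∀ z : EuclideanSpace ℝ (Fin (2*n)), z ≠ 0 → ‖z‖ < δ →
        ‖fderiv ℝ (fun w => f w ^ ((1:ℝ)/n)) z‖ ≤ C :=
      fun z h1 h2 => le_trans (hC₀ z h1 h2) (le_max_left _ _)
    have hnR : (0:ℝ) < (n:ℝ) := by exact_mod_cast hn
    set e : EuclideanSpace ℝ (Fin (2*n)) := EuclideanSpace.single ⟨0, by omega⟩ (1:ℝ) with he
    have hne : ‖e‖ = 1 := by rw [he, EuclideanSpace.norm_single]; norm_num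
    have hnorm_smul : ∀ t : ℝ, 0 < t → ‖t • e‖ = t := by
      intro t ht
      rw [norm_smul, hne, mul_one, Real.norm_eq_abs, abs_of_pos ht]
    have hval : ∀ t : ℝ, 0 < t → t < ρ → f (t • e) = 1/|Real.log (t^2)| := by
      intro t ht htρ
      have h1 := hf (t • e) (fun h => by
        have := hnorm_smul t ht; rw [h] at this; simp at this; exact absurd this.symm ht.ne')
        (by rw [hnorm_smul t ht]; exact lt_of_lt_of_le htρ hρδ)
      rwa [hnorm_smul t ht] at h1
    -- mean value inequality along the ray
    have key : ∀ s r : ℝ, 0 < s → s ≤ r → r < ρ →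
        f (r • e) ^ ((1:ℝ)/n) - f (s • e) ^ ((1:ℝ)/n) ≤ C * r := by
      intro s r hs hsr hrρ
      set A : Set (EuclideanSpace ℝ (Fin (2*n))) :=
        (LinearMap.toSpanSingleton ℝ (EuclideanSpace ℝ (Fin (2*n))) e) '' Icc s r with hA
      have hconv : Convex ℝ A := (convex_Icc s r).linear_image _
      have hmemA : ∀ x ∈ A, ∃ t : ℝ, 0 < t ∧ t < ρ ∧ x = t • e := by
        rintro x ⟨t, ht, rfl⟩
        exact ⟨t, lt_of_lt_of_le hs ht.1, lt_of_le_of_lt ht.2 hrρ,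
          by rw [LinearMap.toSpanSingleton_apply]⟩
      have hprops : ∀ x ∈ A, x ≠ 0 ∧ ‖x‖ < δ ∧
          x ∈ ball (0:EuclideanSpace ℝ (Fin (2*n))) R \ {0} := by
        intro x hx
        obtain ⟨t, ht0, htρ, rfl⟩ := hmemA x hx
        have hxn : ‖t • e‖ = t := hnorm_smul t ht0
        have hx0 : t • e ≠ 0 := fun h => by rw [h] at hxn; simp at hxn; exact absurd hxn.symm ht0.ne'
        refine ⟨hx0, by rw [hxn]; exact lt_of_lt_of_le htρ hρδ, ?_, hx0⟩
        rw [mem_ball_zero_iff, hxn]; exact lt_of_lt_of_le htρ hρR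
      have hdiffF : ∀ x ∈ A, DifferentiableAt ℝ (fun w => f w ^ ((1:ℝ)/n)) x := by
        intro x hx
        obtain ⟨hx0, hxδ, hxU⟩ := hprops x hx
        exact (hdf x hxU).rpow_const (Or.inl (hpos x (hUsub hxU)).ne')
      have hboundF : ∀ x ∈ A, ‖fderiv ℝ (fun w => f w ^ ((1:ℝ)/n)) x‖ ≤ C := by
        intro x hx
        obtain ⟨hx0, hxδ, _⟩ := hprops x hx
        exact hC x hx0 hxδ
      have hsA : s • e ∈ A := ⟨s, ⟨le_refl s, hsr⟩, by rw [LinearMap.toSpanSingleton_apply]⟩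
      have hrA : r • e ∈ A := ⟨r, ⟨hsr, le_refl r⟩, by rw [LinearMap.toSpanSingleton_apply]⟩
      have hmvt := hconv.norm_image_sub_le_of_norm_fderiv_le hdiffF hboundF hsA hrA
      have hdist : ‖r • e - s • e‖ = r - s := by
        rw [← sub_smul, norm_smul, hne, mul_one, Real.norm_eq_abs,
          abs_of_nonneg (sub_nonneg.mpr hsr)]
      rw [hdist] at hmvt
      calc f (r • e) ^ ((1:ℝ)/n) - f (s • e) ^ ((1:ℝ)/n)
          ≤ ‖f (r • e) ^ ((1:ℝ)/n) - f (s • e) ^ ((1:ℝ)/n)‖ := le_abs_self _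
        _ ≤ C * (r - s) := hmvt
        _ ≤ C * r := by nlinarith
    -- choose r small with (1/|log r²|)^{1/n} > 2 C r
    have htend : Tendsto (fun r : ℝ => r * |Real.log (r^2)| ^ ((1:ℝ)/n))
        (nhdsWithin 0 (Ioi 0)) (nhds 0) := by
      have T0 : Tendsto (fun r : ℝ => (-2) * (Real.log r * r))
          (nhdsWithin 0 (Ioi 0)) (nhds 0) := by
        have h := tendsto_log_mul_rpow_nhdsGT_zero one_pos
        have h2 := h.const_mul (-2 : ℝ)
        simpa [Real.rpow_one] using h2
      apply squeeze_zero' ?_ ?_ T0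
      · filter_upwards [self_mem_nhdsWithin] with r hr
        have : (0:ℝ) < r := hr
        positivity
      · have hev : Ioo (0:ℝ) (Real.exp (-(1/2))) ∈ nhdsWithin (0:ℝ) (Ioi 0) :=
          Ioo_mem_nhdsGT (Real.exp_pos _)
        filter_upwards [hev] with r hr
        have hr0 : 0 < r := hr.1
        have hrlt : r < Real.exp (-(1/2)) := hr.2
        have hlog_lt : Real.log r < -(1/2) := by
          have := Real.log_lt_log hr0 hrlt
          rwa [Real.log_exp] at this
        have hlog2 : Real.log (r^2) = 2 * Real.log r := by
          rw [Real.log_pow]; push_cast; ring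
        have habs : |Real.log (r^2)| = 2 * (-Real.log r) := by
          rw [hlog2, abs_of_neg (by linarith : 2 * Real.log r < 0)]; ring
        have h1le : (1:ℝ) ≤ |Real.log (r^2)| := by rw [habs]; linarith
        have hpow_le : |Real.log (r^2)| ^ ((1:ℝ)/n) ≤ |Real.log (r^2)| := by
          nth_rewrite 2 [show |Real.log (r^2)| = |Real.log (r^2)| ^ (1:ℝ) from
            (Real.rpow_one _).symm]
          apply Real.rpow_le_rpow_of_exponent_le h1le
          rw [div_le_one hnR]
          exact_mod_cast hn
        calc r * |Real.log (r^2)| ^ ((1:ℝ)/n) ≤ r * |Real.log (r^2)| := by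
              apply mul_le_mul_of_nonneg_left hpow_le hr0.le
          _ = (-2) * (Real.log r * r) := by rw [habs]; ring
    have hev1 : ∀ᶠ r in nhdsWithin (0:ℝ) (Ioi 0),
        (2*C) * (r * |Real.log (r^2)| ^ ((1:ℝ)/n)) < 1 := by
      have h' : Tendsto (fun r : ℝ => (2*C) * (r * |Real.log (r^2)| ^ ((1:ℝ)/n)))
          (nhdsWithin 0 (Ioi 0)) (nhds 0) := by
        simpa using htend.const_mul (2*C)
      exact h'.eventually_lt_const one_pos
    have hev2 : Ioo (0:ℝ) ρ ∈ nhdsWithin (0:ℝ) (Ioi 0) :=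
      Ioo_mem_nhdsGT hρpos
    obtain ⟨r, hr1, hr2⟩ := (hev1.and (Filter.eventually_of_mem hev2 (fun x hx => hx))).exists
    obtain ⟨hr0, hrρ⟩ := hr2
    have hr1' : r < 1 := by
      have : ρ ≤ 1/2 := hρ2; linarith
    have hlogr2 : Real.log (r^2) < 0 := Real.log_neg (pow_pos hr0 2) (by nlinarith)
    set a := |Real.log (r^2)| with ha
    have haa0 : 0 < a := abs_pos.mpr hlogr2.ne
    have hA0 : 0 < a ^ ((1:ℝ)/n) := Real.rpow_pos_of_pos haa0 _
    have hbig : 2*C*r < (1/a) ^ ((1:ℝ)/n) := by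
      have h1 : (1/a) ^ ((1:ℝ)/n) = 1 / (a ^ ((1:ℝ)/n)) := by
        rw [one_div, one_div, Real.inv_rpow haa0.le]
        exact (one_div _).symm
      rw [h1, lt_div_iff₀ hA0]
      calc 2*C*r * a ^ ((1:ℝ)/n) = (2*C) * (r * a ^ ((1:ℝ)/n)) := by ring
        _ < 1 := hr1
    -- choose s
    set ε := (1/a) ^ ((1:ℝ)/n) - C*r with hε
    have hCr : 0 < C*r := mul_pos hCpos hr0
    have hεpos : 0 < ε := by
      have : C*r < 2*C*r := by nlinarith
      simp only [hε]; linarith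
    set X := (ε⁻¹)^n with hX
    have hXpos : 0 < X := pow_pos (inv_pos.mpr hεpos) n
    set s : ℝ := min (r/2) (Real.exp (-X)) with hs
    have hs0 : 0 < s := lt_min (by linarith) (Real.exp_pos _)
    have hsr : s ≤ r := le_trans (min_le_left _ _) (by linarith)
    have hslog : Real.log s ≤ -X := by
      have h1 : s ≤ Real.exp (-X) := min_le_right _ _
      calc Real.log s ≤ Real.log (Real.exp (-X)) := Real.log_le_log hs0 h1
        _ = -X := Real.log_exp _
    have hs1 : s < 1 := lt_of_le_of_lt (min_le_right _ _)
      (by rw [← Real.exp_zero]; exact Real.exp_lt_exp.mpr (by linarith))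
    have haslog : Real.log (s^2) = 2 * Real.log s := by
      rw [Real.log_pow]; push_cast; ring
    have has_neg : Real.log (s^2) < 0 := by
      rw [haslog]
      have : Real.log s < 0 := Real.log_neg hs0 hs1
      linarith
    have has_ge : 2*X ≤ |Real.log (s^2)| := by
      rw [abs_of_neg has_neg, haslog]; linarith
    have has0 : 0 < |Real.log (s^2)| := lt_of_lt_of_le (by linarith) has_ge
    have hsmall : f (s • e) ^ ((1:ℝ)/n) < ε := by
      rw [hval s hs0 (lt_of_le_of_lt hsr hrρ)]
      have h1 : 1/|Real.log (s^2)| < ε^n := by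
        have h2 : ε^n = 1/X := by
          rw [hX, one_div, ← inv_pow, inv_inv]
        rw [h2]
        exact one_div_lt_one_div_of_lt hXpos (lt_of_lt_of_le (by linarith) has_ge)
      have h3 : (1/|Real.log (s^2)|) ^ ((1:ℝ)/n) < (ε^n) ^ ((1:ℝ)/n) :=
        Real.rpow_lt_rpow (by positivity) h1 (by positivity)
      have h4 : (ε^n : ℝ) ^ ((1:ℝ)/n) = ε := by
        rw [← Real.rpow_natCast ε n, ← Real.rpow_mul hεpos.le]
        rw [mul_one_div, div_self (by exact_mod_cast hn.trans_lt' (by norm_num) |>.ne' : (n:ℝ) ≠ 0)]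
        exact Real.rpow_one ε
      rw [← h4]; exact h3
    -- contradiction
    have hkey := key s r hs0 hsr hrρ
    rw [hval r hr0 hrρ] at hkey
    have hFre : (2:ℝ)*C*r < (1/a) ^ ((1:ℝ)/n) := hbig
    have : (1/a) ^ ((1:ℝ)/n) - f (s • e) ^ ((1:ℝ)/n) > C * r := by
      have := hsmall
      simp only [hε] at this
      linarith
    rw [← ha] at hkey
    linarith
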